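/- Let σ ∈ (0, 1/√3] and let m ≥ 1 be an integer. Set a = σ/√(1 − 2σ²) and define u : ℝ → ℝ³ by u(θ) = (a cos(mθ), a sin(mθ), √(1 − a²)). Then, with geodesic curvature κ(θ) = ‖u''(θ) − ⟨u''(θ), u(θ)⟩u(θ)‖/‖u'(θ)‖², one has the exact identity ∫₀^{2π} (1 + σ² κ(θ)²) ‖u'(θ)‖ dθ = 2π m σ (2 − 3σ²)/√(1 − 2σ²). -/

import Mathlib

/-!
The circle at height `b` and radius `a` with `a² + b² = 1`, run at angular speed `ω`, has constant
speed `|aω|`, and its acceleration has component `-(aω)²` along `u` and, tangent to the sphere, a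
remainder of length `|a| ω² |b|`. So its geodesic curvature is the constant `|b| / |a|`, the energy
integrand is constant, and the identity reduces to algebra with `a² = σ² / (1 - 2σ²)`.
-/

open Real

theorem HasDerivAt.toLp {ι : Type*} [Fintype ι] {p : ENNReal} [Fact (1 ≤ p)]
    {φ : ℝ → ι → ℝ} {φ' : ι → ℝ} {x : ℝ} (h : HasDerivAt φ φ' x) :
    HasDerivAt (fun t => WithLp.toLp p (φ t)) (WithLp.toLp p φ') x :=
  (PiLp.hasFDerivAt_toLp p (φ x)).comp_hasDerivAt x h

lemma EuclideanSpace.norm_vec3 (x y z : ℝ) : ‖!₂[x, y, z]‖ = √(x ^ 2 + y ^ 2 + z ^ 2) := by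
  simp [EuclideanSpace.norm_eq, Fin.sum_univ_three]

lemma EuclideanSpace.inner_vec3 (x y z x' y' z' : ℝ) :
    inner ℝ !₂[x, y, z] !₂[x', y', z'] = x * x' + y * y' + z * z' := by
  simp [PiLp.inner_apply, Fin.sum_univ_three]
  ring

noncomputable def geodesicCurvature {E : Type*} [NormedAddCommGroup E] [InnerProductSpace ℝ E]
    (u : ℝ → E) (θ : ℝ) : ℝ :=
  ‖deriv (deriv u) θ - inner ℝ (deriv (deriv u) θ) (u θ) • u θ‖ / ‖deriv u θ‖ ^ 2

noncomputable def regularizedEnergy {E : Type*} [NormedAddCommGroup E] [InnerProductSpace ℝ E]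
    (σ : ℝ) (u : ℝ → E) : ℝ :=
  ∫ θ in (0 : ℝ)..(2 * π), (1 + σ ^ 2 * geodesicCurvature u θ ^ 2) * ‖deriv u θ‖

noncomputable def latitudeCircle (a b ω θ : ℝ) : EuclideanSpace ℝ (Fin 3) :=
  !₂[a * cos (ω * θ), a * sin (ω * θ), b]

section LatitudeCircle

variable (a b ω : ℝ)

lemma hasDerivAt_latitudeCircle (θ : ℝ) :
    HasDerivAt (latitudeCircle a b ω) !₂[-(a * ω * sin (ω * θ)), a * ω * cos (ω * θ), 0] θ := by
  have hωθ : HasDerivAt (ω * ·) ω θ := by simpa using (hasDerivAt_id θ).const_mul ω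
  refine HasDerivAt.toLp (hasDerivAt_pi.2 fun i => ?_)
  fin_cases i
  · simpa [mul_comm, mul_left_comm, mul_assoc] using ((hasDerivAt_cos _).comp θ hωθ).const_mul a
  · simpa [mul_comm, mul_left_comm, mul_assoc] using ((hasDerivAt_sin _).comp θ hωθ).const_mul a
  · simpa using hasDerivAt_const θ b

lemma deriv_latitudeCircle :
    deriv (latitudeCircle a b ω) = fun θ => !₂[-(a * ω * sin (ω * θ)), a * ω * cos (ω * θ), 0] :=
  funext fun θ => (hasDerivAt_latitudeCircle a b ω θ).deriv

lemma deriv_deriv_latitudeCircle :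
    deriv (deriv (latitudeCircle a b ω)) =
      fun θ => !₂[-(a * ω ^ 2 * cos (ω * θ)), -(a * ω ^ 2 * sin (ω * θ)), 0] := by
  rw [deriv_latitudeCircle]
  funext θ
  have hωθ : HasDerivAt (ω * ·) ω θ := by simpa using (hasDerivAt_id θ).const_mul ω
  refine (HasDerivAt.toLp (hasDerivAt_pi.2 fun i => ?_)).deriv
  fin_cases i
  · simpa [pow_two, mul_comm, mul_left_comm, mul_assoc] using
      ((hasDerivAt_sin _).comp θ hωθ).const_mul (-(a * ω))
  · simpa [pow_two, mul_comm, mul_left_comm, mul_assoc] using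
      ((hasDerivAt_cos _).comp θ hωθ).const_mul (a * ω)
  · simpa using hasDerivAt_const θ (0 : ℝ)

lemma norm_deriv_latitudeCircle (θ : ℝ) : ‖deriv (latitudeCircle a b ω) θ‖ = |a * ω| := by
  rw [deriv_latitudeCircle, EuclideanSpace.norm_vec3, ← sqrt_sq_eq_abs]
  congr 1
  linear_combination (a * ω) ^ 2 * sin_sq_add_cos_sq (ω * θ)

variable {a b ω}

lemma geodesicCurvature_latitudeCircle (ha : a ≠ 0) (hω : ω ≠ 0) (hab : a ^ 2 + b ^ 2 = 1)
    (θ : ℝ) : geodesicCurvature (latitudeCircle a b ω) θ = |b| / |a| := by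
  have htrig := sin_sq_add_cos_sq (ω * θ)
  have hinner : inner ℝ (deriv (deriv (latitudeCircle a b ω)) θ) (latitudeCircle a b ω θ)
      = -(a * ω) ^ 2 := by
    rw [deriv_deriv_latitudeCircle, latitudeCircle, EuclideanSpace.inner_vec3]
    linear_combination -(a * ω) ^ 2 * htrig
  have hnormal : ‖deriv (deriv (latitudeCircle a b ω)) θ
      - inner ℝ (deriv (deriv (latitudeCircle a b ω)) θ) (latitudeCircle a b ω θ)
        • latitudeCircle a b ω θ‖ = |a * ω ^ 2 * b| := by
    rw [hinner, deriv_deriv_latitudeCircle, latitudeCircle, ← sqrt_sq_eq_abs,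
      EuclideanSpace.norm_eq]
    simp only [Fin.sum_univ_three, PiLp.sub_apply, PiLp.smul_apply, smul_eq_mul,
      Matrix.cons_val_zero, Matrix.cons_val_one, Matrix.cons_val_two, Matrix.head_cons,
      Matrix.tail_cons, Real.norm_eq_abs, sq_abs]
    congr 1
    linear_combination (a * ω ^ 2) ^ 2 * ((a ^ 2 - 1) ^ 2 * htrig + (a ^ 2 - 1) * hab)
  rw [geodesicCurvature, hnormal, norm_deriv_latitudeCircle, abs_mul, abs_mul, abs_sq, sq_abs,
    mul_pow, ← sq_abs a]
  field_simp

lemma regularizedEnergy_latitudeCircle (ha : a ≠ 0) (hω : ω ≠ 0) (hab : a ^ 2 + b ^ 2 = 1)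
    (σ : ℝ) :
    regularizedEnergy σ (latitudeCircle a b ω) = 2 * π * |ω| * (a ^ 2 + σ ^ 2 * b ^ 2) / |a| := by
  simp only [regularizedEnergy, geodesicCurvature_latitudeCircle ha hω hab,
    norm_deriv_latitudeCircle, intervalIntegral.integral_const, smul_eq_mul, sub_zero, abs_mul]
  field_simp
  rw [sq_abs, sq_abs]

end LatitudeCircle

/-- For `σ ∈ (0, 1/√3]`, an integer `m ≥ 1`, `a = σ/√(1 − 2σ²)` and the `m`-fold
covered latitude circle `u(θ) = (a cos(mθ), a sin(mθ), √(1 − a²))`, the regularized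
energy satisfies the exact identity
`∫₀^{2π} (1 + σ² κ(θ)²) ‖u'(θ)‖ dθ = 2π m σ (2 − 3σ²)/√(1 − 2σ²)`,
where `κ(θ) = ‖u''(θ) − ⟨u''(θ), u(θ)⟩u(θ)‖/‖u'(θ)‖²`. -/
theorem energy_exact_identity (σ : ℝ) (hσ : σ ∈ Set.Ioc (0 : ℝ) (1 / Real.sqrt 3))
    (m : ℕ) (hm : 1 ≤ m) (a : ℝ) (ha : a = σ / Real.sqrt (1 - 2 * σ ^ 2))
    (u : ℝ → EuclideanSpace ℝ (Fin 3))
    (hu : u = fun θ => WithLp.toLp 2 ![a * Real.cos (m * θ), a * Real.sin (m * θ),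
      Real.sqrt (1 - a ^ 2)])
    (κ : ℝ → ℝ)
    (hκ : ∀ θ, κ θ =
      ‖deriv (deriv u) θ - (inner ℝ (deriv (deriv u) θ) (u θ) : ℝ) • u θ‖
        / ‖deriv u θ‖ ^ 2) :
    ∫ θ in (0 : ℝ)..(2 * π), (1 + σ ^ 2 * κ θ ^ 2) * ‖deriv u θ‖
      = 2 * π * m * σ * (2 - 3 * σ ^ 2) / Real.sqrt (1 - 2 * σ ^ 2) := by
  obtain ⟨hσ0, hσle⟩ := hσ
  have hσ3 : 3 * σ ^ 2 ≤ 1 := by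
    rw [le_div_iff₀ (by positivity)] at hσle
    calc 3 * σ ^ 2 = (σ * √3) ^ 2 := by rw [mul_pow, sq_sqrt zero_le_three, mul_comm]
      _ ≤ 1 := pow_le_one₀ (by positivity) hσle
  have hs : √(1 - 2 * σ ^ 2) ^ 2 = 1 - 2 * σ ^ 2 := sq_sqrt (by linarith)
  have hs0 : 0 < √(1 - 2 * σ ^ 2) := sqrt_pos.2 (by linarith)
  have ha0 : 0 < a := ha ▸ by positivity
  have ha1 : a ^ 2 ≤ 1 := by
    rw [ha, div_pow, hs, div_le_one (by linarith)]
    linarith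
  have hab : a ^ 2 + √(1 - a ^ 2) ^ 2 = 1 := by rw [sq_sqrt (by linarith)]; ring
  have hm0 : (m : ℝ) ≠ 0 := Nat.cast_ne_zero.2 (Nat.one_le_iff_ne_zero.1 hm)
  obtain rfl : κ = geodesicCurvature u := funext hκ
  obtain rfl : u = latitudeCircle a (√(1 - a ^ 2)) m := hu
  change regularizedEnergy σ (latitudeCircle a (√(1 - a ^ 2)) m) = _
  rw [regularizedEnergy_latitudeCircle ha0.ne' hm0 hab, abs_of_pos ha0, Nat.abs_cast,
    sq_sqrt (by linarith), ha]
  field_simp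
  rw [hs]
  ring
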